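/- Let G be a group with finite symmetric generating set S, 1 < p < ∞ with conjugate exponent q. If α lies in the closure in D^p(G)/ℂ of the finitely supported functions (with respect to the seminorm ‖α‖_{D(p)} = (Σ_{g∈S} ‖α∗(g-1)‖_p^p)^{1/p}), and β ∈ D^q(G) is harmonic, then ⟨α, β⟩ = 0, where ⟨α, β⟩ = Σ_{x∈G} Σ_{g∈S} (α(x g⁻¹) - α(x)) conj(β(x g⁻¹) - β(x)). -/

import Mathlib

/-!
Both sides of the pairing are first-order differences, so for finitely supported `φ` the pairing
can be summed by parts: it becomes `∑ₓ φ x · conj (Δβ x)` with `Δβ` a combination of the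
harmonicity sums of `β` (using `S = S⁻¹`), hence vanishes. By Hölder's inequality the pairing is
bounded by `‖α‖_{D(p)}` times a constant depending only on `β`, so the vanishing passes from
finitely supported `φ` to every `α` in their `D(p)`-closure.
-/

open scoped BigOperators ComplexConjugate

open Function

theorem Finset.sum_comp_inv_of_inv_mem {G M : Type*} [InvolutiveInv G] [AddCommMonoid M]
    {S : Finset G} (hS : ∀ g ∈ S, g⁻¹ ∈ S) (f : G → M) :
    ∑ g ∈ S, f g⁻¹ = ∑ g ∈ S, f g :=
  Finset.sum_nbij' (·⁻¹) (·⁻¹) hS hS (fun g _ => inv_inv g) (fun g _ => inv_inv g)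
    (fun g _ => by simp)

theorem summable_and_norm_tsum_mul_conj_le {ι 𝕜 : Type*} [RCLike 𝕜] {p q : ℝ}
    (hpq : p.HolderConjugate q) {a b : ι → 𝕜}
    (ha : Summable fun i => ‖a i‖ ^ p) (hb : Summable fun i => ‖b i‖ ^ q) :
    (Summable fun i => a i * conj (b i)) ∧
      ‖∑' i, a i * conj (b i)‖ ≤ (∑' i, ‖a i‖ ^ p) ^ (1 / p) * (∑' i, ‖b i‖ ^ q) ^ (1 / q) := by
  have hnorm : ∀ i, ‖a i * conj (b i)‖ = ‖a i‖ * ‖b i‖ := fun i => by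
    rw [norm_mul, RCLike.norm_conj]
  obtain ⟨hsum, hle⟩ := Real.summable_and_inner_le_Lp_mul_Lq_tsum_of_nonneg hpq
    (fun i => norm_nonneg (a i)) (fun i => norm_nonneg (b i)) ha hb
  simp only [← hnorm] at hsum hle
  exact ⟨hsum.of_norm, (norm_tsum_le_tsum_norm hsum).trans hle⟩

section Dirichlet

variable {G 𝕜 : Type*} [Group G] [RCLike 𝕜]

-- `x ↦ α (x * g⁻¹) - α x` is the paper's `α ∗ (g - 1)`; `MemDirichlet S p` is `D^p(G)`.
def MemDirichlet (S : Finset G) (p : ℝ) (α : G → 𝕜) : Prop :=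
  ∀ g ∈ S, Summable fun x => ‖α (x * g⁻¹) - α x‖ ^ p

noncomputable def dirichletSeminorm (S : Finset G) (p : ℝ) (α : G → 𝕜) : ℝ :=
  (∑ g ∈ S, ∑' x, ‖α (x * g⁻¹) - α x‖ ^ p) ^ (1 / p)

noncomputable def dirichletPairing (S : Finset G) (α β : G → 𝕜) : 𝕜 :=
  ∑ g ∈ S, ∑' x, (α (x * g⁻¹) - α x) * conj (β (x * g⁻¹) - β x)

def IsHarmonic (S : Finset G) (β : G → 𝕜) : Prop :=
  ∀ x, ∑ g ∈ S, (β (x * g⁻¹) - β x) = 0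

variable {S : Finset G} {p q : ℝ}

theorem Function.HasFiniteSupport.sub_comp_mul_right {φ : G → 𝕜} (hφ : φ.HasFiniteSupport)
    (g : G) : (fun x => φ (x * g⁻¹) - φ x).HasFiniteSupport :=
  (hφ.comp_of_injective (mul_left_injective g⁻¹)).sub hφ

theorem MemDirichlet.sub_of_hasFiniteSupport {α φ : G → 𝕜} (hα : MemDirichlet S p α)
    (hφ : φ.HasFiniteSupport) : MemDirichlet S p (α - φ) := by
  intro g hg
  refine (hα g hg).congr_cofinite ?_
  filter_upwards [(hφ.sub_comp_mul_right g).compl_mem_cofinite] with x hx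
  rw [Set.mem_compl_iff, mem_support, not_not] at hx
  rw [Pi.sub_apply, Pi.sub_apply, sub_sub_sub_comm, hx, sub_zero]

theorem MemDirichlet.summable_mul_conj (hpq : p.HolderConjugate q) {α β : G → 𝕜}
    (hα : MemDirichlet S p α) (hβ : MemDirichlet S q β) {g : G} (hg : g ∈ S) :
    Summable fun x => (α (x * g⁻¹) - α x) * conj (β (x * g⁻¹) - β x) :=
  (summable_and_norm_tsum_mul_conj_le hpq (hα g hg) (hβ g hg)).1

theorem IsHarmonic.sum_sub_comp_mul {β : G → 𝕜} (hβ : IsHarmonic S β)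
    (hS : ∀ g ∈ S, g⁻¹ ∈ S) (x : G) : ∑ g ∈ S, (β (x * g) - β x) = 0 := by
  simpa using (Finset.sum_comp_inv_of_inv_mem hS fun g => β (x * g⁻¹) - β x).trans (hβ x)

theorem tsum_sub_comp_mul_right_mul_eq {φ : G → 𝕜} (hφ : φ.HasFiniteSupport) (g : G)
    (c : G → 𝕜) : ∑' x, (φ (x * g⁻¹) - φ x) * c x = ∑' x, φ x * (c (x * g) - c x) := by
  have hshift : Summable fun x => φ (x * g⁻¹) * c x :=
    summable_of_hasFiniteSupport ((hφ.comp_of_injective (mul_left_injective g⁻¹)).mul_left c)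
  have hφc : Summable fun x => φ x * c x := summable_of_hasFiniteSupport (hφ.mul_left c)
  have hφc' : Summable fun x => φ x * c (x * g) := summable_of_hasFiniteSupport (hφ.mul_left _)
  have hreindex : ∑' x, φ (x * g⁻¹) * c x = ∑' x, φ x * c (x * g) := by
    rw [← (Equiv.mulRight g).tsum_eq]
    simp
  simp only [sub_mul, mul_sub]
  rw [hshift.tsum_sub hφc, hreindex, hφc'.tsum_sub hφc]

theorem dirichletPairing_eq_zero_of_hasFiniteSupport (hS : ∀ g ∈ S, g⁻¹ ∈ S) {φ β : G → 𝕜}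
    (hφ : φ.HasFiniteSupport) (hβ : IsHarmonic S β) : dirichletPairing S φ β = 0 := by
  have hsummable : ∀ g ∈ S, Summable fun x =>
      φ x * (conj (β (x * g * g⁻¹) - β (x * g)) - conj (β (x * g⁻¹) - β x)) :=
    fun g _ => summable_of_hasFiniteSupport (hφ.mul_left _)
  have hpointwise : ∀ x, ∑ g ∈ S,
      (conj (β (x * g * g⁻¹) - β (x * g)) - conj (β (x * g⁻¹) - β x)) = 0 := by
    intro x
    simp only [mul_inv_cancel_right, ← map_sub, ← map_sum, Finset.sum_sub_distrib,
      ← neg_sub (β (x * _)), Finset.sum_neg_distrib, hβ.sum_sub_comp_mul hS x, hβ x]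
    simp
  unfold dirichletPairing
  simp_rw [tsum_sub_comp_mul_right_mul_eq hφ]
  rw [← Summable.tsum_finsetSum hsummable]
  simp_rw [← Finset.mul_sum, hpointwise, mul_zero, tsum_zero]

theorem dirichletPairing_sub_of_hasFiniteSupport (hpq : p.HolderConjugate q) {α φ β : G → 𝕜}
    (hα : MemDirichlet S p α) (hφ : φ.HasFiniteSupport) (hβ : MemDirichlet S q β) :
    dirichletPairing S (α - φ) β = dirichletPairing S α β - dirichletPairing S φ β := by
  unfold dirichletPairing
  rw [← Finset.sum_sub_distrib]
  refine Finset.sum_congr rfl fun g hg => ?_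
  have hφβ : Summable fun x => (φ (x * g⁻¹) - φ x) * conj (β (x * g⁻¹) - β x) :=
    summable_of_hasFiniteSupport ((hφ.sub_comp_mul_right g).mul_left _)
  rw [← (hα.summable_mul_conj hpq hβ hg).tsum_sub hφβ]
  exact tsum_congr fun x => by simp only [Pi.sub_apply]; ring

theorem tsum_rpow_le_dirichletSeminorm (hp : 0 < p) {α : G → 𝕜} {g : G} (hg : g ∈ S) :
    (∑' x, ‖α (x * g⁻¹) - α x‖ ^ p) ^ (1 / p) ≤ dirichletSeminorm S p α := by
  have hnonneg : ∀ h : G, 0 ≤ ∑' x, ‖α (x * h⁻¹) - α x‖ ^ p :=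
    fun h => tsum_nonneg fun x => by positivity
  exact Real.rpow_le_rpow (hnonneg g)
    (Finset.single_le_sum (fun h _ => hnonneg h) hg) (by positivity)

theorem norm_dirichletPairing_le (hpq : p.HolderConjugate q) {α β : G → 𝕜}
    (hα : MemDirichlet S p α) (hβ : MemDirichlet S q β) :
    ‖dirichletPairing S α β‖ ≤
      dirichletSeminorm S p α * ∑ g ∈ S, (∑' x, ‖β (x * g⁻¹) - β x‖ ^ q) ^ (1 / q) := by
  rw [Finset.mul_sum]
  refine (norm_sum_le _ _).trans (Finset.sum_le_sum fun g hg => ?_)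
  refine (summable_and_norm_tsum_mul_conj_le hpq (hα g hg) (hβ g hg)).2.trans ?_
  gcongr
  exact tsum_rpow_le_dirichletSeminorm hpq.pos hg

end Dirichlet

theorem pairing_vanishes_on_closure_general {G : Type*} [Group G] (S : Finset G)
    (hsym : ∀ g ∈ S, g⁻¹ ∈ S)
    (p q : ℝ) (hp : 1 < p) (hpq : 1 / p + 1 / q = 1)
    (α β : G → ℂ)
    (hα : ∀ g ∈ S, Summable (fun x : G => ‖α (x * g⁻¹) - α x‖ ^ p))
    (hclos : ∀ ε : ℝ, 0 < ε → ∃ φ : G → ℂ, (Function.support φ).Finite ∧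
      (∑ g ∈ S, ∑' x : G,
        ‖(α (x * g⁻¹) - φ (x * g⁻¹)) - (α x - φ x)‖ ^ p) ^ (1 / p) < ε)
    (hβ : ∀ g ∈ S, Summable (fun x : G => ‖β (x * g⁻¹) - β x‖ ^ q))
    (hharm : ∀ x : G, ∑ g ∈ S, (β (x * g⁻¹) - β x) = 0) :
    ∑ g ∈ S, ∑' x : G, (α (x * g⁻¹) - α x) * conj (β (x * g⁻¹) - β x) = 0 := by
  have hPQ : p.HolderConjugate q :=
    Real.holderConjugate_iff.mpr ⟨hp, by simpa [one_div] using hpq⟩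
  set B := ∑ g ∈ S, (∑' x, ‖β (x * g⁻¹) - β x‖ ^ q) ^ (1 / q)
  have hB : 0 ≤ B := Finset.sum_nonneg fun g _ => by positivity
  change dirichletPairing S α β = 0
  refine norm_le_zero_iff.mp
    ((le_mul_of_forall_lt₀ (a := 0) (b := B) fun ε hε B' hB' => ?_).trans_eq (zero_mul B))
  obtain ⟨φ, hφ, hαφ⟩ := hclos ε hε
  calc ‖dirichletPairing S α β‖ = ‖dirichletPairing S (α - φ) β‖ := by
        rw [dirichletPairing_sub_of_hasFiniteSupport hPQ hα hφ hβ,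
          dirichletPairing_eq_zero_of_hasFiniteSupport hsym hφ hharm, sub_zero]
    _ ≤ dirichletSeminorm S p (α - φ) * B :=
        norm_dirichletPairing_le hPQ (MemDirichlet.sub_of_hasFiniteSupport hα hφ) hβ
    _ ≤ ε * B' := mul_le_mul hαφ.le hB'.le hB hε.le

/-- If `α` lies in the `D(p)`-closure of the finitely supported functions and
`β ∈ D^q(G)` is harmonic, then the pairing `⟨α, β⟩` vanishes. -/
theorem pairing_vanishes_on_closure {G : Type*} [Group G] (S : Finset G)
    (hsym : ∀ g ∈ S, g⁻¹ ∈ S) (hgen : Subgroup.closure (S : Set G) = ⊤)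
    (p q : ℝ) (hp : 1 < p) (hpq : 1 / p + 1 / q = 1)
    (α β : G → ℂ)
    (hα : ∀ g ∈ S, Summable (fun x : G => ‖α (x * g⁻¹) - α x‖ ^ p))
    (hclos : ∀ ε : ℝ, 0 < ε → ∃ φ : G → ℂ, (Function.support φ).Finite ∧
      (∑ g ∈ S, ∑' x : G,
        ‖(α (x * g⁻¹) - φ (x * g⁻¹)) - (α x - φ x)‖ ^ p) ^ (1 / p) < ε)
    (hβ : ∀ g ∈ S, Summable (fun x : G => ‖β (x * g⁻¹) - β x‖ ^ q))
    (hharm : ∀ x : G, ∑ g ∈ S, (β (x * g⁻¹) - β x) = 0) :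
    ∑ g ∈ S, ∑' x : G, (α (x * g⁻¹) - α x) * conj (β (x * g⁻¹) - β x) = 0 :=
  pairing_vanishes_on_closure_general S hsym p q hp hpq α β hα hclos hβ hharm
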